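/- Let μ be a purely atomic probability measure on a standard Borel space Ω, i.e., μ(S) = 1 for some countable set S. Then every concept class 𝒞 on Ω (every family of measurable subsets of Ω) is Glivenko–Cantelli with respect to μ. -/

import Mathlib

open MeasureTheory Filter

/-- The `n`-fold product (i.i.d.) measure on `Fin n → Ω`. -/
noncomputable def prodMeas {Ω : Type*} [MeasurableSpace Ω] (μ : Measure Ω) (n : ℕ) :
    Measure (Fin n → Ω) := Measure.pi fun _ => μ

/-- Empirical frequency of a concept `C` on a sample `x` of size `n`. -/
noncomputable def empFreq {Ω : Type*} (C : Set Ω) {n : ℕ} (x : Fin n → Ω) : ℝ :=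
  (Finset.univ.filter fun i => @decide (x i ∈ C) (Classical.propDecidable _) = true).card / n

/-- The concept class `𝒞` is Glivenko–Cantelli with respect to `μ`. -/
def IsGC {Ω : Type*} [MeasurableSpace Ω] (μ : Measure Ω) (𝒞 : Set (Set Ω)) : Prop :=
  ∀ ε : ℝ, 0 < ε →
    Tendsto (fun n => prodMeas μ n
      {x | ε ≤ ⨆ C ∈ 𝒞, |(μ C).toReal - empFreq C x|}) atTop (nhds 0)

open scoped ENNReal ProbabilityTheory
open ProbabilityTheory

/-!
An i.i.d. sample of size `n` defines an empirical probability measure `ν`, and `empFreq C x = ν C`.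
If a finite set `F` carries all but `η` of the mass of `μ`, then for every set `C`,
`|μ C - ν C| ≤ 2 ∑_{ω ∈ F} |μ {ω} - ν {ω}| + η`: compare the two measures atom by atom on `F`,
and bound the mass `ν` puts outside `F` by `1 - ν F`, which is close to `1 - μ F ≤ η`.
Since `μ` is carried by a countable set, such an `F` exists for every `η > 0`, and by Chebyshev's
inequality the empirical frequencies of the finitely many atoms in `F` converge in probability.
-/

section Empirical

variable {Ω : Type*} {n : ℕ}

lemma empFreq_eq_inv_mul_sum (C : Set Ω) (x : Fin n → Ω) :
    empFreq C x = (n : ℝ)⁻¹ * ∑ i, C.indicator 1 (x i) := by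
  classical
  rw [empFreq, inv_mul_eq_div, Finset.card_filter]
  push_cast
  congr 1
  refine Finset.sum_congr rfl fun i _ ↦ ?_
  by_cases h : x i ∈ C <;> simp [h]

lemma empFreq_eq_smul_sum (C : Set Ω) :
    (empFreq C : (Fin n → Ω) → ℝ) = (n : ℝ)⁻¹ • ∑ i, fun x ↦ C.indicator (1 : Ω → ℝ) (x i) := by
  ext x
  simp [empFreq_eq_inv_mul_sum]

variable [MeasurableSpace Ω]

noncomputable def empiricalMeasure (x : Fin n → Ω) : Measure Ω :=
  (n : ℝ≥0∞)⁻¹ • ∑ i, Measure.dirac (x i)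

instance [NeZero n] (x : Fin n → Ω) : IsProbabilityMeasure (empiricalMeasure x) :=
  ⟨by simp [empiricalMeasure, ENNReal.inv_mul_cancel (NeZero.ne _)]⟩

lemma empFreq_eq_measureReal [MeasurableSingletonClass Ω] (C : Set Ω) (x : Fin n → Ω) :
    empFreq C x = (empiricalMeasure x).real C := by
  rw [empFreq_eq_inv_mul_sum, measureReal_def, empiricalMeasure]
  simp only [Measure.smul_apply, Measure.coe_finsetSum, Finset.sum_apply, Measure.dirac_apply,
    smul_eq_mul, ENNReal.toReal_mul, ENNReal.toReal_inv, ENNReal.toReal_natCast]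
  rw [ENNReal.toReal_sum fun i _ ↦ by by_cases h : x i ∈ C <;> simp [h]]
  congr 1
  refine Finset.sum_congr rfl fun i _ ↦ ?_
  by_cases h : x i ∈ C <;> simp [h]

end Empirical

section FiniteApproximation

variable {α : Type*} [MeasurableSpace α] [MeasurableSingletonClass α] {μ ν : Measure α}

lemma abs_measureReal_sub_le_sum_of_subset [IsFiniteMeasure μ] [IsFiniteMeasure ν]
    {G F : Finset α} (hGF : G ⊆ F) :
    |μ.real G - ν.real G| ≤ ∑ ω ∈ F, |μ.real {ω} - ν.real {ω}| := by
  rw [← sum_measureReal_singleton, ← sum_measureReal_singleton, ← Finset.sum_sub_distrib]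
  exact (Finset.abs_sum_le_sum_abs _ _).trans
    (Finset.sum_le_sum_of_subset_of_nonneg hGF fun _ _ _ ↦ abs_nonneg _)

-- `C` need not be measurable: `μ.real C` is then the outer measure, still additive across `F`.
lemma abs_measureReal_sub_le [IsProbabilityMeasure μ] [IsProbabilityMeasure ν]
    (F : Finset α) (C : Set α) :
    |μ.real C - ν.real C| ≤ 2 * ∑ ω ∈ F, |μ.real {ω} - ν.real {ω}| + μ.real (↑F)ᶜ := by
  classical
  have hF : MeasurableSet (F : Set α) := F.measurableSet
  have hCF : C ∩ F = ↑(F.filter (· ∈ C)) := by ext; simp [and_comm]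
  have hin := abs_le.mp (abs_measureReal_sub_le_sum_of_subset (μ := μ) (ν := ν)
    (Finset.filter_subset (· ∈ C) F))
  have hall := abs_le.mp (abs_measureReal_sub_le_sum_of_subset (μ := μ) (ν := ν)
    (subset_refl F))
  have hμout : μ.real (C \ F) ≤ μ.real (↑F)ᶜ := measureReal_mono (Set.sdiff_subset_compl _ _)
  have hνout : ν.real (C \ F) ≤ ν.real (↑F)ᶜ := measureReal_mono (Set.sdiff_subset_compl _ _)
  rw [← measureReal_inter_add_sdiff (μ := μ) hF, ← measureReal_inter_add_sdiff (μ := ν) hF, hCF]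
  rw [probReal_compl_eq_one_sub hF] at hμout hνout ⊢
  have := measureReal_nonneg (μ := μ) (s := C \ F)
  have := measureReal_nonneg (μ := ν) (s := C \ F)
  rw [abs_le]
  constructor <;> linarith

lemma exists_finset_measureReal_compl_lt [IsProbabilityMeasure μ] {S : Set α}
    (hS : S.Countable) (hμS : μ S = 1) {η : ℝ} (hη : 0 < η) :
    ∃ F : Finset α, μ.real (↑F)ᶜ < η := by
  have hsum : HasSum (fun ω : S ↦ μ {(ω : α)}) 1 := by
    have h := tsum_measure_preimage_singleton (μ := μ) hS (f := id)
      fun ω _ ↦ measurableSet_singleton ω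
    simp only [Set.preimage_id] at h
    rw [← hμS, ← h]
    exact ENNReal.summable.hasSum
  have hlim : Tendsto (fun F : Finset S ↦ μ.real ↑(F.map (Function.Embedding.subtype _)))
      atTop (nhds 1) := by
    refine ((ENNReal.tendsto_toReal ENNReal.one_ne_top).comp hsum).congr fun F ↦ ?_
    rw [Function.comp_apply, ← sum_measureReal_singleton, Finset.sum_map,
      ENNReal.toReal_sum fun _ _ ↦ measure_ne_top μ _]
    rfl
  obtain ⟨F, hF⟩ := (hlim.eventually (lt_mem_nhds (sub_lt_self 1 hη))).exists
  exact ⟨_, by rw [probReal_compl_eq_one_sub (Finset.measurableSet _)]; linarith⟩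

end FiniteApproximation

section WeakLaw

variable {Ω : Type*} [MeasurableSpace Ω] {μ : Measure Ω} {n : ℕ} {A : Set Ω}

instance [IsProbabilityMeasure μ] : IsProbabilityMeasure (prodMeas μ n) := by
  unfold prodMeas; infer_instance

lemma memLp_indicator_one [IsFiniteMeasure μ] (hA : MeasurableSet A) :
    MemLp (A.indicator (1 : Ω → ℝ)) 2 μ :=
  memLp_indicator_const 2 hA (1 : ℝ) (.inr (measure_ne_top μ A))

lemma variance_indicator_one_le [IsProbabilityMeasure μ] (hA : MeasurableSet A) :
    Var[A.indicator (1 : Ω → ℝ); μ] ≤ 4⁻¹ := by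
  have hbdd : ∀ᵐ ω ∂μ, A.indicator (1 : Ω → ℝ) ω ∈ Set.Icc 0 1 :=
    ae_of_all μ fun ω ↦ by by_cases h : ω ∈ A <;> simp [h]
  convert variance_le_sq_of_bounded hbdd (measurable_one.indicator hA).aemeasurable using 1
  norm_num

variable [IsProbabilityMeasure μ]

lemma memLp_empFreq (hA : MeasurableSet A) : MemLp (empFreq A) 2 (prodMeas μ n) := by
  rw [empFreq_eq_smul_sum]
  exact (memLp_finsetSum' _ fun i _ ↦ (memLp_indicator_one hA).comp_measurePreserving
    (measurePreserving_eval _ i)).const_smul _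

lemma integral_empFreq [NeZero n] (hA : MeasurableSet A) :
    ∫ x, empFreq A x ∂prodMeas μ n = μ.real A := by
  simp only [empFreq_eq_inv_mul_sum, prodMeas]
  rw [integral_const_mul, integral_finsetSum _ fun i _ ↦
    integrable_comp_eval ((memLp_indicator_one hA).integrable one_le_two)]
  rw [Finset.sum_congr rfl fun i _ ↦ integral_comp_eval (μ := fun _ ↦ μ)
    (measurable_one.indicator hA).aestronglyMeasurable]
  rw [integral_indicator_one hA, Finset.sum_const, Finset.card_univ, Fintype.card_fin,
    nsmul_eq_mul, ← mul_assoc, inv_mul_cancel₀ (NeZero.ne _), one_mul]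

lemma variance_empFreq_le [NeZero n] (hA : MeasurableSet A) :
    Var[empFreq A; prodMeas μ n] ≤ (4 * n : ℝ)⁻¹ := by
  rw [empFreq_eq_smul_sum, variance_smul, prodMeas, variance_sum_pi fun _ ↦
    memLp_indicator_one hA]
  calc ((n : ℝ)⁻¹) ^ 2 * ∑ _i : Fin n, Var[A.indicator (1 : Ω → ℝ); μ]
      ≤ ((n : ℝ)⁻¹) ^ 2 * ∑ _i : Fin n, 4⁻¹ := by
        gcongr
        exact variance_indicator_one_le hA
    _ = (4 * n : ℝ)⁻¹ := by
        have : (n : ℝ) ≠ 0 := NeZero.ne _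
        simp only [Finset.sum_const, Finset.card_univ, Fintype.card_fin, nsmul_eq_mul]
        field_simp

lemma prodMeas_le_abs_sub_empFreq_le [NeZero n] (hA : MeasurableSet A) {δ : ℝ} (hδ : 0 < δ) :
    prodMeas μ n {x | δ ≤ |μ.real A - empFreq A x|} ≤ ENNReal.ofReal (4 * n * δ ^ 2)⁻¹ := by
  have hcheb := meas_ge_le_variance_div_sq (memLp_empFreq (μ := μ) (n := n) hA) hδ
  simp_rw [integral_empFreq hA, abs_sub_comm (empFreq A _)] at hcheb
  refine hcheb.trans (ENNReal.ofReal_le_ofReal ?_)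
  calc Var[empFreq A; prodMeas μ n] / δ ^ 2 ≤ (4 * n : ℝ)⁻¹ / δ ^ 2 := by
        gcongr
        exact variance_empFreq_le hA
    _ = (4 * n * δ ^ 2)⁻¹ := by rw [div_eq_mul_inv, mul_inv (4 * (n : ℝ))]

lemma tendsto_prodMeas_le_abs_sub_empFreq (hA : MeasurableSet A) {δ : ℝ} (hδ : 0 < δ) :
    Tendsto (fun n ↦ prodMeas μ n {x | δ ≤ |μ.real A - empFreq A x|}) atTop (nhds 0) := by
  have hbound : Tendsto (fun n : ℕ ↦ ENNReal.ofReal (4 * n * δ ^ 2)⁻¹) atTop (nhds 0) := by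
    rw [← ENNReal.ofReal_zero]
    refine ENNReal.tendsto_ofReal (tendsto_inv_atTop_zero.comp ?_)
    exact (tendsto_natCast_atTop_atTop.const_mul_atTop four_pos).atTop_mul_const (by positivity)
  refine tendsto_of_tendsto_of_tendsto_of_le_of_le' tendsto_const_nhds hbound
    (.of_forall fun _ ↦ zero_le) ?_
  filter_upwards [eventually_ne_atTop 0] with n hn
  have : NeZero n := ⟨hn⟩
  exact prodMeas_le_abs_sub_empFreq_le hA hδ

end WeakLaw

lemma iSup_abs_sub_empFreq_le {Ω : Type*} [MeasurableSpace Ω] [MeasurableSingletonClass Ω]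
    {μ : Measure Ω} [IsProbabilityMeasure μ] {n : ℕ} [NeZero n] (𝒞 : Set (Set Ω))
    (F : Finset Ω) (x : Fin n → Ω) :
    ⨆ C ∈ 𝒞, |μ.real C - empFreq C x| ≤
      2 * ∑ ω ∈ F, |μ.real {ω} - empFreq {ω} x| + μ.real (↑F)ᶜ := by
  simp only [empFreq_eq_measureReal]
  exact Real.iSup_le (fun C ↦ Real.iSup_le (fun _ ↦ abs_measureReal_sub_le F C)
    (by positivity)) (by positivity)

theorem stmt4 {Ω : Type*} [MeasurableSpace Ω] [StandardBorelSpace Ω]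
    (μ : Measure Ω) [IsProbabilityMeasure μ]
    (S : Set Ω) (hS : S.Countable) (hμS : μ S = 1)
    (𝒞 : Set (Set Ω)) :
    IsGC μ 𝒞 := by
  intro ε hε
  obtain ⟨F, hF⟩ := exists_finset_measureReal_compl_lt hS hμS (half_pos hε)
  set δ := ε / (4 * (F.card + 1))
  have hδ : 0 < δ := by positivity
  have hFδ : 2 * (F.card * δ) ≤ ε / 2 := by
    have : δ * (4 * (F.card + 1)) = ε := div_mul_cancel₀ _ (by positivity)
    nlinarith
  have hdev := tendsto_finsetSum F fun ω _ ↦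
    tendsto_prodMeas_le_abs_sub_empFreq (μ := μ) (measurableSet_singleton ω) hδ
  rw [Finset.sum_const_zero] at hdev
  refine tendsto_of_tendsto_of_tendsto_of_le_of_le' tendsto_const_nhds hdev
    (.of_forall fun _ ↦ zero_le) ?_
  filter_upwards [eventually_ne_atTop 0] with n hn
  have : NeZero n := ⟨hn⟩
  refine (measure_mono fun x hx ↦ ?_).trans (measure_biUnion_finset_le F _)
  by_contra hx'
  simp only [Set.mem_iUnion, Set.mem_ofPred_eq, not_exists, not_le] at hx'
  have hsum : ∑ ω ∈ F, |μ.real {ω} - empFreq {ω} x| ≤ F.card * δ := by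
    simpa using Finset.sum_le_card_nsmul F _ δ fun ω hω ↦ (hx' ω hω).le
  linarith [hx.trans (iSup_abs_sub_empFreq_le 𝒞 F x)]
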